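/- arXiv:2310.18020 — 5 statements merged into one kernel-verified Lean document; each statement's English description precedes it below -/
import Mathlib

section
/- Let A be a positive semidefinite N×N complex Hermitian matrix with all entries in the closed disc of radius ρ centered at 0. Then equality holds in the Loewner inequality A^{∘M} ≤ 𝒞·h[A] (that is, 𝒞·h[A] − A^{∘M} = 0) if and only if either N = 1 and A is the 1×1 matrix with entry ρ, or n₀ > 0 and A is the zero matrix. -/
/-!
Entrywise, `𝒞 • h[A] = A^{∘M}` says that every entry `a` of `A` satisfies
`𝒞 · Σ_j c_j a^{n_j} = a^M`, and the diagonal entries of `A` are reals in `[0, ρ]`.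
For `0 < a ≤ ρ` we have `a^M ≤ ρ^{M - n_{N-1}} a^{n_{N-1}}`, while
`𝒞 ≥ ρ^{M - n_{N-1}} / c_{N-1}` because `𝐧_{N-1}` only raises the last entry of `𝐧`
to `M`, so `V(𝐧_{N-1}) ≥ V(𝐧)`. When `N ≥ 2` the remaining summands of `𝒞` are positive
and the inequality is strict; when `N = 1` equality holds exactly at `a = ρ`. Hence a
nonzero diagonal entry forces `N = 1` and `A = (ρ)`; otherwise the trace of the positive
semidefinite `A` vanishes, so `A = 0`, and the equation at `a = 0` holds iff `n₀ > 0`.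
-/

open Matrix BigOperators
open scoped ComplexOrder

/-- The Vandermonde-type product V(m) = ∏_{k<l} (m_l - m_k). -/
noncomputable def Vdm (N : ℕ) (m : Fin N → ℝ) : ℝ :=
  ∏ p ∈ Finset.univ.filter (fun p : Fin N × Fin N => p.1 < p.2), (m p.2 - m p.1)

/-- The tuple 𝐧_j: 𝐧 with n_j removed and M appended. -/
noncomputable def njTuple (N : ℕ) (n : Fin N → ℝ) (M : ℝ) (j : Fin N) : Fin N → ℝ :=
  fun i => if (i : ℕ) < (j : ℕ) then n i
    else if h : (i : ℕ) + 1 < N then n ⟨(i : ℕ) + 1, h⟩ else M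

/-- Entrywise k-th power of a complex matrix (with 0^0 = 1). -/
def hPow {N : ℕ} (A : Matrix (Fin N) (Fin N) ℂ) (k : ℕ) : Matrix (Fin N) (Fin N) ℂ :=
  Matrix.of fun i j => A i j ^ k

/-- The sharp constant 𝒞. -/
noncomputable def CCgen (N : ℕ) (n : Fin N → ℕ) (M : ℕ) (ρ : ℝ) (c : Fin N → ℝ) : ℝ :=
  ∑ j : Fin N, Vdm N (njTuple N (fun i => (n i : ℝ)) (M : ℝ) j) ^ 2
      / Vdm N (fun i => (n i : ℝ)) ^ 2 * ρ ^ (M - n j) / c j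

/-- h[A] = Σ_j c_j A^{∘n_j}. -/
noncomputable def hMat {N : ℕ} (n : Fin N → ℕ) (c : Fin N → ℝ)
    (A : Matrix (Fin N) (Fin N) ℂ) : Matrix (Fin N) (Fin N) ℂ :=
  ∑ j : Fin N, (c j : ℂ) • hPow A (n j)

lemma Vdm_pos {N : ℕ} {m : Fin N → ℝ} (hm : StrictMono m) : 0 < Vdm N m :=
  Finset.prod_pos fun _ hp => sub_pos.2 (hm (Finset.mem_filter.1 hp).2)

lemma Vdm_le_Vdm_update_last {K : ℕ} {m : Fin (K + 1) → ℝ} (hm : Monotone m) {x : ℝ}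
    (hx : m (Fin.last K) ≤ x) :
    Vdm (K + 1) m ≤ Vdm (K + 1) (Function.update m (Fin.last K) x) := by
  refine Finset.prod_le_prod (fun p hp => sub_nonneg.2 (hm (Finset.mem_filter.1 hp).2.le))
    fun p hp => ?_
  have hlt : p.1 < p.2 := (Finset.mem_filter.1 hp).2
  have hp₁ : p.1 ≠ Fin.last K := (hlt.trans_le (Fin.le_last _)).ne
  rw [Function.update_of_ne hp₁]
  by_cases hp₂ : p.2 = Fin.last K
  · rw [hp₂, Function.update_self]
    linarith
  · rw [Function.update_of_ne hp₂]

lemma Vdm_one (m : Fin 1 → ℝ) : Vdm 1 m = 1 := by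
  simp [Vdm, Subsingleton.elim _ (0 : Fin 1)]

lemma njTuple_strictMono {N : ℕ} {n : Fin N → ℝ} (hn : StrictMono n) {M : ℝ}
    (hM : ∀ i, n i < M) (j : Fin N) : StrictMono (njTuple N n M j) := by
  intro i₁ i₂ h
  have h' : (i₁ : ℕ) < i₂ := h
  simp only [njTuple]
  split_ifs <;> first | exact hn (by simp only [Fin.lt_def]; omega) | exact hM _ | omega

lemma njTuple_last {K : ℕ} (n : Fin (K + 1) → ℝ) (M : ℝ) :
    njTuple (K + 1) n M (Fin.last K) = Function.update n (Fin.last K) M := by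
  funext i
  by_cases hi : i = Fin.last K
  · subst hi
    simp [njTuple]
  · have hiK : (i : ℕ) < K := Fin.val_lt_last hi
    simp [njTuple, hiK, Function.update_of_ne hi]


section CCgen

variable {M : ℕ} {ρ : ℝ}

lemma CCgen_summand_pos {N : ℕ} {n : Fin N → ℕ} {c : Fin N → ℝ} (hn : StrictMono n)
    (hM : ∀ j, n j < M) (hρ : 0 < ρ) (hc : ∀ j, 0 < c j) (j : Fin N) :
    0 < Vdm N (njTuple N (fun i => (n i : ℝ)) M j) ^ 2 / Vdm N (fun i => (n i : ℝ)) ^ 2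
      * ρ ^ (M - n j) / c j := by
  have hn' : StrictMono fun i => (n i : ℝ) := Nat.strictMono_cast.comp hn
  have := Vdm_pos (njTuple_strictMono hn' (fun i => Nat.cast_lt.2 (hM i)) j)
  have := Vdm_pos hn'
  have := hc j
  positivity

lemma CCgen_pos {K : ℕ} {n : Fin (K + 1) → ℕ} {c : Fin (K + 1) → ℝ} (hn : StrictMono n)
    (hM : ∀ j, n j < M) (hρ : 0 < ρ) (hc : ∀ j, 0 < c j) : 0 < CCgen (K + 1) n M ρ c :=
  Finset.sum_pos (fun j _ => CCgen_summand_pos hn hM hρ hc j) Finset.univ_nonempty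

lemma CCgen_one (n : Fin 1 → ℕ) (c : Fin 1 → ℝ) :
    CCgen 1 n M ρ c = ρ ^ (M - n 0) / c 0 := by
  simp [CCgen, Vdm_one]

lemma div_lt_CCgen {K : ℕ} {n : Fin (K + 2) → ℕ} {c : Fin (K + 2) → ℝ} (hn : StrictMono n)
    (hM : ∀ j, n j < M) (hρ : 0 < ρ) (hc : ∀ j, 0 < c j) :
    ρ ^ (M - n (Fin.last (K + 1))) / c (Fin.last (K + 1)) < CCgen (K + 2) n M ρ c := by
  set L := Fin.last (K + 1)
  have hn' : StrictMono fun i => (n i : ℝ) := Nat.strictMono_cast.comp hn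
  have hV : Vdm (K + 2) (fun i => (n i : ℝ))
      ≤ Vdm (K + 2) (njTuple (K + 2) (fun i => (n i : ℝ)) M L) := by
    rw [njTuple_last]
    exact Vdm_le_Vdm_update_last hn'.monotone (Nat.cast_le.2 (hM L).le)
  have hratio : 1 ≤ Vdm (K + 2) (njTuple (K + 2) (fun i => (n i : ℝ)) M L) ^ 2
      / Vdm (K + 2) (fun i => (n i : ℝ)) ^ 2 := by
    have := Vdm_pos hn'
    rw [one_le_div (by positivity)]
    gcongr
  calc ρ ^ (M - n L) / c L
      ≤ Vdm (K + 2) (njTuple (K + 2) (fun i => (n i : ℝ)) M L) ^ 2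
          / Vdm (K + 2) (fun i => (n i : ℝ)) ^ 2 * ρ ^ (M - n L) / c L := by
        have := hc L
        gcongr
        exact le_mul_of_one_le_left (by positivity) hratio
    _ < CCgen (K + 2) n M ρ c :=
        Finset.single_lt_sum (j := 0) (Fin.last_pos.ne) (Finset.mem_univ _) (Finset.mem_univ _)
          (CCgen_summand_pos hn hM hρ hc 0) fun k _ _ => (CCgen_summand_pos hn hM hρ hc k).le

end CCgen

section Scalar

variable {M : ℕ} {ρ a : ℝ}

lemma pow_le_pow_sub_mul_pow {k : ℕ} (hk : k ≤ M) (ha : 0 ≤ a) (haρ : a ≤ ρ) :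
    a ^ M ≤ ρ ^ (M - k) * a ^ k := by
  rw [← Nat.sub_add_cancel hk, pow_add, Nat.add_sub_cancel]
  gcongr

lemma pow_lt_CCgen_mul_sum {K : ℕ} {n : Fin (K + 2) → ℕ} {c : Fin (K + 2) → ℝ}
    (hn : StrictMono n) (hM : ∀ j, n j < M) (hρ : 0 < ρ) (hc : ∀ j, 0 < c j)
    (ha : 0 < a) (haρ : a ≤ ρ) : a ^ M < CCgen (K + 2) n M ρ c * ∑ j, c j * a ^ n j := by
  set L := Fin.last (K + 1)
  have hC := CCgen_pos hn hM hρ hc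
  have hcL := hc L
  calc a ^ M ≤ ρ ^ (M - n L) * a ^ n L := pow_le_pow_sub_mul_pow (hM L).le ha.le haρ
    _ < CCgen (K + 2) n M ρ c * c L * a ^ n L := by
        gcongr
        exact (div_lt_iff₀ hcL).1 (div_lt_CCgen hn hM hρ hc)
    _ ≤ CCgen (K + 2) n M ρ c * ∑ j, c j * a ^ n j := by
        rw [mul_assoc]
        gcongr
        exact Finset.single_le_sum (f := fun j => c j * a ^ n j)
          (fun j _ => (mul_pos (hc j) (pow_pos ha _)).le) (Finset.mem_univ L)

lemma CCgen_one_mul_sum_eq_pow_iff {n : Fin 1 → ℕ} {c : Fin 1 → ℝ} (hM : n 0 < M)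
    (hρ : 0 ≤ ρ) (hc : 0 < c 0) (ha : 0 < a) :
    CCgen 1 n M ρ c * ∑ j, c j * a ^ n j = a ^ M ↔ a = ρ := by
  have hsplit : a ^ M = a ^ (M - n 0) * a ^ n 0 := by
    rw [← pow_add, Nat.sub_add_cancel hM.le]
  have hlhs : ρ ^ (M - n 0) / c 0 * (c 0 * a ^ n 0) = ρ ^ (M - n 0) * a ^ n 0 := by
    field_simp
  rw [CCgen_one, Fin.sum_univ_one, hlhs, hsplit, mul_left_inj' (pow_pos ha _).ne',
    pow_left_inj₀ hρ ha.le (Nat.sub_pos_of_lt hM).ne', eq_comm]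

lemma CCgen_mul_sum_zero_pow_eq_zero_iff {K : ℕ} {n : Fin (K + 1) → ℕ}
    {c : Fin (K + 1) → ℝ} (hn : StrictMono n) (hM : ∀ j, n j < M) (hρ : 0 < ρ)
    (hc : ∀ j, 0 < c j) :
    CCgen (K + 1) n M ρ c * ∑ j, c j * (0 : ℝ) ^ n j = 0 ↔ 0 < n 0 := by
  rw [mul_eq_zero, or_iff_right (CCgen_pos hn hM hρ hc).ne',
    Finset.sum_eq_zero_iff_of_nonneg fun j _ => by have := hc j; positivity]
  simp only [Finset.mem_univ, true_implies, mul_eq_zero, (hc _).ne', false_or, ne_eq,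
    pow_eq_zero_iff', true_and]
  exact ⟨fun h => Nat.pos_of_ne_zero (h 0),
    fun h j => (h.trans_le (hn.monotone (Fin.zero_le j))).ne'⟩

lemma CCgen_mul_sum_eq_pow_iff {K : ℕ} {n : Fin (K + 1) → ℕ} {c : Fin (K + 1) → ℝ}
    (hn : StrictMono n) (hM : ∀ j, n j < M) (hρ : 0 < ρ) (hc : ∀ j, 0 < c j)
    (ha : 0 ≤ a) (haρ : a ≤ ρ) :
    CCgen (K + 1) n M ρ c * ∑ j, c j * a ^ n j = a ^ M ↔
      (K = 0 ∧ a = ρ) ∨ (0 < n 0 ∧ a = 0) := by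
  rcases ha.eq_or_lt with rfl | ha
  · rw [zero_pow ((Nat.zero_le _).trans_lt (hM 0)).ne',
      CCgen_mul_sum_zero_pow_eq_zero_iff hn hM hρ hc]
    simp [hρ.ne]
  simp only [ha.ne', and_false, or_false]
  cases K with
  | zero => simpa using CCgen_one_mul_sum_eq_pow_iff (hM 0) hρ.le (hc 0) ha
  | succ K =>
    simpa using (pow_lt_CCgen_mul_sum hn hM hρ hc ha haρ).ne'

end Scalar

lemma smul_hMat_sub_hPow_eq_zero_iff {N : ℕ} (n : Fin N → ℕ) (c : Fin N → ℝ) (C : ℂ)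
    (M : ℕ) (A : Matrix (Fin N) (Fin N) ℂ) :
    C • hMat n c A - hPow A M = 0 ↔
      ∀ i j, C * ∑ k, (c k : ℂ) * A i j ^ n k = A i j ^ M := by
  rw [sub_eq_zero, ← Matrix.ext_iff]
  simp [hMat, hPow, Matrix.sum_apply]

theorem stmt3 (N : ℕ) (hN : 1 ≤ N) (ρ : ℝ) (hρ : 0 < ρ) (n₀ M : ℕ)
    (hM : ∀ j : Fin N, n₀ + (j : ℕ) < M) (c : Fin N → ℝ) (hc : ∀ j, 0 < c j)
    (A : Matrix (Fin N) (Fin N) ℂ) (hA : A.PosSemidef)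
    (hbound : ∀ i j, ‖A i j‖ ≤ ρ) :
    (((CCgen N (fun j => n₀ + (j : ℕ)) M ρ c : ℝ) : ℂ) •
        hMat (fun j => n₀ + (j : ℕ)) c A - hPow A M = 0) ↔
      ((N = 1 ∧ A = Matrix.of fun _ _ => (ρ : ℂ)) ∨ (0 < n₀ ∧ A = 0)) := by
  obtain ⟨K, rfl⟩ : ∃ K, N = K + 1 := Nat.exists_eq_add_of_le' hN
  have hn : StrictMono fun j : Fin (K + 1) => n₀ + (j : ℕ) := fun _ _ h => by simpa using h
  have key (a : ℝ) (ha : 0 ≤ a) (haρ : a ≤ ρ) :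
      (CCgen (K + 1) (fun j => n₀ + (j : ℕ)) M ρ c : ℂ) *
          ∑ k, (c k : ℂ) * (a : ℂ) ^ (n₀ + (k : ℕ)) = (a : ℂ) ^ M ↔
        (K = 0 ∧ a = ρ) ∨ (0 < n₀ ∧ a = 0) := by
    have := CCgen_mul_sum_eq_pow_iff hn hM hρ hc ha haρ
    simp only [Fin.val_zero, add_zero] at this
    exact_mod_cast this
  rw [smul_hMat_sub_hPow_eq_zero_iff]
  constructor
  · intro h
    by_cases hA0 : A = 0
    · have := (key 0 le_rfl hρ.le).1 (by simpa [hA0] using h 0 0)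
      exact Or.inr ⟨by simpa [hρ.ne] using this, hA0⟩
    · obtain ⟨i, hi⟩ : ∃ i, A i i ≠ 0 := by
        by_contra! hdiag
        exact hA0 (hA.trace_eq_zero_iff.1 (Finset.sum_eq_zero fun i _ => hdiag i))
      have hAii : A i i = (‖A i i‖ : ℂ) := Complex.eq_coe_norm_of_nonneg hA.diag_nonneg
      obtain ⟨rfl, hAiiρ⟩ : K = 0 ∧ ‖A i i‖ = ρ := by
        simpa [hi] using (key _ (norm_nonneg _) (hbound i i)).1 (hAii ▸ h i i)
      refine Or.inl ⟨rfl, Matrix.ext fun i' j' => ?_⟩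
      rw [Subsingleton.elim (α := Fin 1) i' i, Subsingleton.elim (α := Fin 1) j' i, hAii, hAiiρ,
        Matrix.of_apply]
  · rintro (⟨hK, rfl⟩ | ⟨hn₀, rfl⟩) i j
    · exact (key ρ hρ.le le_rfl).2 (Or.inl ⟨by omega, rfl⟩)
    · simpa using (key 0 le_rfl hρ.le).2 (Or.inr ⟨hn₀, rfl⟩)
end

section
/- Suppose N ≥ 1 and C, D are positive semidefinite N×N complex matrices. The following are equivalent: (1) for every v ∈ ℂ^N, if v* C v = 0 then v* D v = 0; (2) the kernel of C is contained in the kernel of D; (3) there exists a constant t > 0 such that C − t·D is positive semidefinite. -/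
/-!
For positive semidefinite `A`, `v* A v = 0` iff `A v = 0`; this gives (1) ⇔ (2), and (3) ⇒ (2)
since on `ker C` the form of `C - t D` is `-t v* D v`.

For (2) ⇒ (3), choose a complement `W` of `ker C`. Adding a vector of `ker C ⊆ ker D` changes
neither form, so it suffices to compare them on `W`. There the form of `C` is positive away from
`0`; both forms are continuous and homogeneous of degree 2, so comparing them on the compact unit
sphere of `W` gives `t v* D v ≤ v* C v` for some `t > 0`.
-/

open Matrix
open scoped ComplexOrder

theorem exists_pos_mul_le_of_isCompact {X : Type*} [TopologicalSpace X] {K : Set X}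
    (hK : IsCompact K) {f g : X → ℝ} (hf : ContinuousOn f K) (hg : ContinuousOn g K)
    (hf_pos : ∀ x ∈ K, 0 < f x) : ∃ t : ℝ, 0 < t ∧ ∀ x ∈ K, t * g x ≤ f x := by
  obtain ⟨M, hM⟩ := hK.bddAbove_image (hg.div hf fun x hx => (hf_pos x hx).ne')
  refine ⟨(max M 1)⁻¹, by positivity, fun x hx => ?_⟩
  have hfx := hf_pos x hx
  have hgM : g x / f x ≤ max M 1 := (hM ⟨x, hx, rfl⟩).trans (le_max_left M 1)
  rw [div_le_iff₀ hfx] at hgM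
  rw [inv_mul_le_iff₀ (by positivity)]
  linarith [mul_comm (max M 1) (f x)]

theorem exists_pos_mul_le_of_sq_homogeneous {E : Type*} [NormedAddCommGroup E]
    [NormedSpace ℝ E] [ProperSpace E] {f g : E → ℝ} (hf : Continuous f) (hg : Continuous g)
    (hf_smul : ∀ (c : ℝ) x, f (c • x) = c ^ 2 * f x)
    (hg_smul : ∀ (c : ℝ) x, g (c • x) = c ^ 2 * g x)
    (hf_pos : ∀ x, x ≠ 0 → 0 < f x) : ∃ t : ℝ, 0 < t ∧ ∀ x, t * g x ≤ f x := by
  obtain ⟨t, ht, hle⟩ := exists_pos_mul_le_of_isCompact (isCompact_sphere (0 : E) 1)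
    hf.continuousOn hg.continuousOn fun x hx => hf_pos x (ne_zero_of_mem_unit_sphere ⟨x, hx⟩)
  refine ⟨t, ht, fun x => ?_⟩
  rcases eq_or_ne x 0 with rfl | hx
  · have hf0 : f 0 = 0 := by simpa using hf_smul 0 0
    have hg0 : g 0 = 0 := by simpa using hg_smul 0 0
    simp [hf0, hg0]
  · have hu : ‖x‖⁻¹ • x ∈ Metric.sphere (0 : E) 1 := by
      simp [norm_smul, hx]
    have hxu : x = ‖x‖ • ‖x‖⁻¹ • x := by
      rw [smul_smul, mul_inv_cancel₀ (norm_ne_zero_iff.mpr hx), one_smul]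
    rw [hxu, hf_smul, hg_smul, mul_left_comm]
    exact mul_le_mul_of_nonneg_left (hle _ hu) (sq_nonneg _)

namespace Matrix

variable {𝕜 n : Type*} [RCLike 𝕜] [Fintype n]

theorem re_star_smul_dotProduct_mulVec_smul (A : Matrix n n 𝕜) (c : ℝ) (x : n → 𝕜) :
    RCLike.re (star (c • x) ⬝ᵥ A *ᵥ (c • x)) = c ^ 2 * RCLike.re (star x ⬝ᵥ A *ᵥ x) := by
  rw [star_smul, mulVec_smul, smul_dotProduct, dotProduct_smul, smul_smul, RCLike.smul_re,
    star_trivial, sq]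

theorem continuous_re_star_dotProduct_mulVec (A : Matrix n n 𝕜) :
    Continuous fun x : n → 𝕜 => RCLike.re (star x ⬝ᵥ A *ᵥ x) :=
  RCLike.continuous_re.comp
    (continuous_star.dotProduct (continuous_const.matrix_mulVec continuous_id))

theorem IsHermitian.star_add_dotProduct_mulVec_add {A : Matrix n n 𝕜} (hA : A.IsHermitian)
    {u : n → 𝕜} (hu : A *ᵥ u = 0) (w : n → 𝕜) :
    star (u + w) ⬝ᵥ A *ᵥ (u + w) = star w ⬝ᵥ A *ᵥ w := by
  have hu' : star u ᵥ* A = 0 := by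
    rw [← hA.eq, ← star_mulVec, hu, star_zero]
  rw [mulVec_add, hu, zero_add, star_add, add_dotProduct, dotProduct_mulVec, hu',
    zero_dotProduct, zero_add]

theorem IsHermitian.coe_re_star_dotProduct_mulVec {A : Matrix n n 𝕜} (hA : A.IsHermitian)
    (x : n → 𝕜) : (RCLike.re (star x ⬝ᵥ A *ᵥ x) : 𝕜) = star x ⬝ᵥ A *ᵥ x :=
  RCLike.ext (by simp) (by simp [hA.im_star_dotProduct_mulVec_self])

theorem PosSemidef.re_star_dotProduct_mulVec_pos {A : Matrix n n 𝕜} (hA : A.PosSemidef)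
    {x : n → 𝕜} (hx : A *ᵥ x ≠ 0) : 0 < RCLike.re (star x ⬝ᵥ A *ᵥ x) := by
  refine (hA.re_dotProduct_nonneg x).lt_of_ne fun h => hx ?_
  rw [← hA.dotProduct_mulVec_zero_iff, ← hA.isHermitian.coe_re_star_dotProduct_mulVec, ← h,
    RCLike.ofReal_zero]

theorem posSemidef_sub_smul_iff {C D : Matrix n n 𝕜} (hC : C.IsHermitian) (hD : D.IsHermitian)
    (t : ℝ) : (C - (t : 𝕜) • D).PosSemidef ↔
      ∀ x, t * RCLike.re (star x ⬝ᵥ D *ᵥ x) ≤ RCLike.re (star x ⬝ᵥ C *ᵥ x) := by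
  have hform : ∀ x, star x ⬝ᵥ (C - (t : 𝕜) • D) *ᵥ x =
      ((RCLike.re (star x ⬝ᵥ C *ᵥ x) - t * RCLike.re (star x ⬝ᵥ D *ᵥ x) : ℝ) : 𝕜) := by
    intro x
    rw [sub_mulVec, dotProduct_sub, smul_mulVec, dotProduct_smul, smul_eq_mul,
      RCLike.ofReal_sub, RCLike.ofReal_mul, hC.coe_re_star_dotProduct_mulVec,
      hD.coe_re_star_dotProduct_mulVec]
  have hherm : (C - (t : 𝕜) • D).IsHermitian := hC.sub (hD.smul (RCLike.conj_ofReal t))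
  simp only [posSemidef_iff_dotProduct_mulVec, hherm, hform, RCLike.ofReal_nonneg, sub_nonneg,
    true_and]

theorem PosSemidef.mulVec_eq_zero_of_posSemidef_sub_smul {C D : Matrix n n 𝕜}
    (hC : C.IsHermitian) (hD : D.PosSemidef) {t : ℝ} (ht : 0 < t)
    (h : (C - (t : 𝕜) • D).PosSemidef) {x : n → 𝕜} (hx : C *ᵥ x = 0) : D *ᵥ x = 0 := by
  by_contra hDx
  have hle := (posSemidef_sub_smul_iff hC hD.isHermitian t).1 h x
  rw [hx, dotProduct_zero, map_zero] at hle
  exact hle.not_gt (mul_pos ht (hD.re_star_dotProduct_mulVec_pos hDx))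

theorem PosSemidef.exists_posSemidef_sub_smul {C D : Matrix n n 𝕜} (hC : C.PosSemidef)
    (hD : D.PosSemidef) (h : ∀ x, C *ᵥ x = 0 → D *ᵥ x = 0) :
    ∃ t : ℝ, 0 < t ∧ (C - (t : 𝕜) • D).PosSemidef := by
  obtain ⟨W, hW⟩ := (LinearMap.ker C.mulVecLin).exists_isCompl
  have hC_pos (w : W) (hw : w ≠ 0) : 0 < RCLike.re (star (w : n → 𝕜) ⬝ᵥ C *ᵥ w) := by
    refine hC.re_star_dotProduct_mulVec_pos fun hCw => hw ?_
    exact Subtype.ext (Submodule.disjoint_def.1 hW.disjoint w hCw w.2)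
  obtain ⟨t, ht, hle⟩ := exists_pos_mul_le_of_sq_homogeneous (E := W)
    ((continuous_re_star_dotProduct_mulVec C).comp continuous_subtype_val)
    ((continuous_re_star_dotProduct_mulVec D).comp continuous_subtype_val)
    (fun c w => re_star_smul_dotProduct_mulVec_smul C c w)
    (fun c w => re_star_smul_dotProduct_mulVec_smul D c w) hC_pos
  refine ⟨t, ht, (posSemidef_sub_smul_iff hC.isHermitian hD.isHermitian t).2 fun x => ?_⟩
  obtain ⟨u, hu, w, hw, rfl⟩ := Submodule.mem_sup.1 (hW.sup_eq_top ▸ Submodule.mem_top (x := x))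
  rw [hC.isHermitian.star_add_dotProduct_mulVec_add hu,
    hD.isHermitian.star_add_dotProduct_mulVec_add (h u hu)]
  exact hle ⟨w, hw⟩

end Matrix

theorem stmt7_general (N : ℕ) (C D : Matrix (Fin N) (Fin N) ℂ)
    (hC : C.PosSemidef) (hD : D.PosSemidef) :
    ((∀ v : Fin N → ℂ, star v ⬝ᵥ C.mulVec v = 0 → star v ⬝ᵥ D.mulVec v = 0) ↔
      (∀ v : Fin N → ℂ, C.mulVec v = 0 → D.mulVec v = 0)) ∧
    ((∀ v : Fin N → ℂ, C.mulVec v = 0 → D.mulVec v = 0) ↔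
      ∃ t : ℝ, 0 < t ∧ (C - (t : ℂ) • D).PosSemidef) := by
  refine ⟨by simp only [hC.dotProduct_mulVec_zero_iff, hD.dotProduct_mulVec_zero_iff],
    hC.exists_posSemidef_sub_smul hD, ?_⟩
  rintro ⟨t, ht, h⟩ v
  exact hD.mulVec_eq_zero_of_posSemidef_sub_smul hC.isHermitian ht h

theorem stmt7 (N : ℕ) (hN : 1 ≤ N) (C D : Matrix (Fin N) (Fin N) ℂ)
    (hC : C.PosSemidef) (hD : D.PosSemidef) :
    ((∀ v : Fin N → ℂ, star v ⬝ᵥ C.mulVec v = 0 → star v ⬝ᵥ D.mulVec v = 0) ↔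
      (∀ v : Fin N → ℂ, C.mulVec v = 0 → D.mulVec v = 0)) ∧
    ((∀ v : Fin N → ℂ, C.mulVec v = 0 → D.mulVec v = 0) ↔
      ∃ t : ℝ, 0 < t ∧ (C - (t : ℂ) • D).PosSemidef) :=
  stmt7_general N C D hC hD
end

section
/- Let A be a positive semidefinite N×N real symmetric matrix with nonnegative entries, where N ≥ 1, and suppose the rows of A are pairwise distinct. Then there exists a vector u ∈ [0, ∞)^N with pairwise distinct entries such that A − u uᵀ is positive semidefinite and, for each i, u_i = 0 if and only if the i-th row of A is zero. -/
open Matrix Polynomial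

/-!
Put `w k = t ^ k` for a generic `t > 0`. Then `(A w) i - (A w) j` is the value at `t` of the
polynomial whose coefficients are the entries of `A i - A j`, so distinct rows give distinct
entries of `A w`; since `w > 0` and `A ≥ 0` entrywise, `(A w) i = 0` exactly when row `i` vanishes.
Cauchy–Schwarz for the form of `A` gives `(xᵀ A w)² ≤ (xᵀ A x) (wᵀ A w)`, so
`A - c² (A w)(A w)ᵀ` is positive semidefinite as soon as `c² wᵀ A w ≤ 1`; take `u = c A w`.
-/

section Ordered

variable {R : Type*} [CommRing R] [LinearOrder R] [IsStrictOrderedRing R]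

theorem finite_setOf_dotProduct_pow_eq_zero {n : ℕ} {a : Fin n → R} (ha : a ≠ 0) :
    {t : R | a ⬝ᵥ (fun k : Fin n => t ^ (k : ℕ)) = 0}.Finite := by
  classical
  have hp : ofFn n a ≠ 0 := fun h => ha (injective_ofFn n (h.trans (ofFn_zero n).symm))
  refine (finite_setOfPred_isRoot hp).subset fun t ht => ?_
  simpa [IsRoot, ofFn_eq_sum_monomial, eval_finsetSum, dotProduct] using ht

theorem Matrix.exists_pos_injective_mulVec_pow {m : Type*} [Finite m] {n : ℕ}
    {A : Matrix m (Fin n) R} (hA : Function.Injective A) :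
    ∃ t : R, 0 < t ∧ Function.Injective (A *ᵥ fun k : Fin n => t ^ (k : ℕ)) := by
  have hbad : (⋃ (i) (j) (_ : i ≠ j),
      {t : R | (A i - A j) ⬝ᵥ (fun k : Fin n => t ^ (k : ℕ)) = 0}).Finite :=
    Set.finite_iUnion fun i => Set.finite_iUnion fun j => Set.finite_iUnion fun hij =>
      finite_setOf_dotProduct_pow_eq_zero (sub_ne_zero.2 (hA.ne hij))
  obtain ⟨t, ht, htbad⟩ := ((Set.Ioi_infinite 0).sdiff hbad).nonempty
  refine ⟨t, ht, fun i j hij => by_contra fun hne => htbad ?_⟩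
  simp only [Set.mem_iUnion, Set.mem_ofPred_eq]
  exact ⟨i, j, hne, by rw [sub_dotProduct]; exact sub_eq_zero.2 hij⟩

variable {ι : Type*} [Fintype ι] {A : Matrix ι ι R} {w : ι → R}

theorem Matrix.mulVec_nonneg (hA : ∀ i j, 0 ≤ A i j) (hw : ∀ j, 0 ≤ w j) (i : ι) :
    0 ≤ (A *ᵥ w) i :=
  Finset.sum_nonneg fun j _ => mul_nonneg (hA i j) (hw j)

theorem Matrix.mulVec_apply_eq_zero_iff_of_pos (hA : ∀ i j, 0 ≤ A i j) (hw : ∀ j, 0 < w j)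
    (i : ι) :
    (A *ᵥ w) i = 0 ↔ ∀ j, A i j = 0 := by
  simp only [mulVec, dotProduct]
  rw [Finset.sum_eq_zero_iff_of_nonneg fun j _ => mul_nonneg (hA i j) (hw j).le]
  simp [(hw _).ne']

end Ordered

namespace Matrix.PosSemidef

variable {ι : Type*} [Fintype ι] {A : Matrix ι ι ℝ}

theorem sq_dotProduct_mulVec_le (hA : A.PosSemidef) (x y : ι → ℝ) :
    (x ⬝ᵥ A *ᵥ y) ^ 2 ≤ (x ⬝ᵥ A *ᵥ x) * (y ⬝ᵥ A *ᵥ y) := by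
  classical
  have hsymm : A.toBilin'.IsSymm := isSymm_toBilin'_iff_isSymm.2 hA.1
  simpa only [toBilin'_apply'] using A.toBilin'.apply_sq_le_of_symm
    (fun x => by simpa [toBilin'_apply'] using hA.dotProduct_mulVec_nonneg x)
    (LinearMap.BilinForm.isSymm_iff.1 hsymm) x y

theorem sub_vecMulVec_smul_mulVec (hA : A.PosSemidef) {w : ι → ℝ} {c : ℝ}
    (hc : c ^ 2 * (w ⬝ᵥ A *ᵥ w) ≤ 1) :
    (A - vecMulVec (c • A *ᵥ w) (c • A *ᵥ w)).PosSemidef := by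
  refine .of_dotProduct_mulVec_nonneg (hA.1.sub (posSemidef_vecMulVec_self_star _).1) fun x => ?_
  have hx : 0 ≤ x ⬝ᵥ A *ᵥ x := by simpa using hA.dotProduct_mulVec_nonneg x
  have hcs := hA.sq_dotProduct_mulVec_le x w
  have hform : x ⬝ᵥ (A - vecMulVec (c • A *ᵥ w) (c • A *ᵥ w)) *ᵥ x
      = x ⬝ᵥ A *ᵥ x - c ^ 2 * (x ⬝ᵥ A *ᵥ w) ^ 2 := by
    rw [sub_mulVec, dotProduct_sub, vecMulVec_mulVec, op_smul_eq_smul, dotProduct_smul,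
      smul_dotProduct, dotProduct_smul, dotProduct_comm (A *ᵥ w), smul_eq_mul, smul_eq_mul]
    ring
  simp only [star_trivial, hform]
  nlinarith [mul_le_mul_of_nonneg_left hcs (sq_nonneg c), mul_le_mul_of_nonneg_right hc hx]

end Matrix.PosSemidef

theorem stmt8_general (N : ℕ) (A : Matrix (Fin N) (Fin N) ℝ)
    (hA : A.PosSemidef) (hnn : ∀ i j, 0 ≤ A i j)
    (hrows : Function.Injective (fun i => A i)) :
    ∃ u : Fin N → ℝ, (∀ i, 0 ≤ u i) ∧ Function.Injective u ∧
      (A - Matrix.of fun i j => u i * u j).PosSemidef ∧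
      ∀ i, (u i = 0 ↔ ∀ j, A i j = 0) := by
  obtain ⟨t, ht, hinj⟩ := exists_pos_injective_mulVec_pow hrows
  set w : Fin N → ℝ := fun k => t ^ (k : ℕ)
  have hw : ∀ k, 0 < w k := fun k => pow_pos ht _
  set q := w ⬝ᵥ A *ᵥ w
  have hq : 0 ≤ q := by simpa using hA.dotProduct_mulVec_nonneg w
  -- Any `c > 0` with `c ^ 2 * q ≤ 1` works; the shift by one avoids a case split on `q = 0`.
  set c := (√(q + 1))⁻¹
  have hc : 0 < c := inv_pos.2 (Real.sqrt_pos.2 (by linarith))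
  have hcq : c ^ 2 * q ≤ 1 := by
    rw [inv_pow, Real.sq_sqrt (by linarith), inv_mul_le_iff₀ (by linarith)]
    linarith
  refine ⟨c • A *ᵥ w, fun i => mul_nonneg hc.le (mulVec_nonneg hnn (fun k => (hw k).le) i),
    (smul_right_injective _ hc.ne').comp hinj, hA.sub_vecMulVec_smul_mulVec hcq, fun i => ?_⟩
  rw [Pi.smul_apply, smul_eq_zero, or_iff_right hc.ne', mulVec_apply_eq_zero_iff_of_pos hnn hw]

theorem stmt8 (N : ℕ) (hN : 1 ≤ N) (A : Matrix (Fin N) (Fin N) ℝ)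
    (hA : A.PosSemidef) (hnn : ∀ i j, 0 ≤ A i j)
    (hrows : Function.Injective (fun i => A i)) :
    ∃ u : Fin N → ℝ, (∀ i, 0 ≤ u i) ∧ Function.Injective u ∧
      (A - Matrix.of fun i j => u i * u j).PosSemidef ∧
      ∀ i, (u i = 0 ↔ ∀ j, A i j = 0) :=
  stmt8_general N A hA hnn hrows
end

section
/- Fix an integer N ≥ 1 and strictly increasing real N-tuples 𝐦 = (m₀ < ⋯ < m_{N−1}) and 𝐧 = (n₀ < ⋯ < n_{N−1}) with 𝐦 ≠ 𝐧 and m_j ≤ n_j for all j. Let u ∈ (0, ∞)^N have pairwise distinct entries, let k ∈ {1, …, N}, and let t > u_k be such that the vector v obtained from u by replacing the k-th coordinate by t still has pairwise distinct entries. Then det(u^{∘𝐦}) ≠ 0, det(v^{∘𝐦}) ≠ 0, and det(u^{∘𝐧})/det(u^{∘𝐦}) < det(v^{∘𝐧})/det(v^{∘𝐦}). -/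
/-!
A generalised Vandermonde determinant `det (w ^∘ μ)` with distinct positive nodes and distinct
exponents never vanishes: a combination of `r` real powers with `r` positive zeros is zero, by
Rolle's theorem and induction. Deforming increasing exponents linearly to `0, 1, …, r - 1` then
shows that `det (w ^∘ μ)` has the sign of the ordinary Vandermonde determinant of `w`.

Raising the exponents from `m` to `n` one at a time, and permuting the nodes so that the moving one
comes first, it suffices to raise a single exponent `m p` to `b`. For that step the Desnanot–Jacobi
identity for the generalised Vandermonde matrix with nodes `t, a, w` and exponents `m` with `b`
inserted writes the increase of the ratio as a quotient of four generalised Vandermonde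
determinants, whose sign is that of `t - a`.
-/

open Matrix Finset Function

noncomputable def genVandermonde {r : ℕ} (w μ : Fin r → ℝ) : Matrix (Fin r) (Fin r) ℝ :=
  .of fun i j => w i ^ μ j

theorem det_genVandermonde_comp_perm {r : ℕ} (w μ : Fin r → ℝ) (σ : Equiv.Perm (Fin r)) :
    (genVandermonde (w ∘ σ) μ).det = Equiv.Perm.sign σ * (genVandermonde w μ).det :=
  det_permute σ (genVandermonde w μ)

theorem exists_strictMono_deriv_eq_zero {r : ℕ} {f f' : ℝ → ℝ} {x : Fin (r + 1) → ℝ}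
    (hx : StrictMono x) (hf : ∀ s, x 0 ≤ s → HasDerivAt f (f' s) s) (hfx : ∀ i, f (x i) = 0) :
    ∃ y : Fin r → ℝ, StrictMono y ∧ (∀ i, x 0 < y i) ∧ ∀ i, f' (y i) = 0 := by
  have hf' (i : Fin r) (s : ℝ) (hs : x i.castSucc ≤ s) : HasDerivAt f (f' s) s :=
    hf s ((hx.monotone (Fin.zero_le _)).trans hs)
  have hrolle (i : Fin r) : ∃ y ∈ Set.Ioo (x i.castSucc) (x i.succ), f' y = 0 :=
    exists_hasDerivAt_eq_zero (hx Fin.castSucc_lt_succ)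
      (fun s hs => (hf' i s hs.1).continuousAt.continuousWithinAt) ((hfx _).trans (hfx _).symm)
      fun s hs => hf' i s hs.1.le
  choose y hy hy0 using hrolle
  refine ⟨y, fun i j hij => ?_, fun i => (hx.monotone (Fin.zero_le _)).trans_lt (hy i).1, hy0⟩
  calc y i < x i.succ := (hy i).2
    _ ≤ x j.castSucc := hx.monotone (Fin.succ_le_castSucc_iff.2 hij)
    _ < y j := (hy j).1

theorem eq_zero_of_sum_mul_rpow_eq_zero {r : ℕ} {μ c x : Fin r → ℝ} (hμ : Injective μ)
    (hx : StrictMono x) (hx0 : ∀ i, 0 < x i) (h : ∀ i, ∑ j, c j * x i ^ μ j = 0) : c = 0 := by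
  induction r with
  | zero => exact Subsingleton.elim _ _
  | succ r ih =>
    -- Dividing by `s ^ μ 0` and differentiating removes the term `c 0` and one zero.
    set F : ℝ → ℝ := fun s => ∑ j, c j * s ^ (μ j - μ 0)
    set F' : ℝ → ℝ := fun s => ∑ j, c j * ((μ j - μ 0) * s ^ (μ j - μ 0 - 1))
    have hF (i : Fin (r + 1)) : F (x i) = 0 := by
      simp only [F, Real.rpow_sub (hx0 i), mul_div_assoc', ← Finset.sum_div, h i, zero_div]
    have hF' (s : ℝ) (hs : x 0 ≤ s) : HasDerivAt F (F' s) s :=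
      HasDerivAt.fun_sum fun j _ =>
        (Real.hasDerivAt_rpow_const (Or.inl ((hx0 0).trans_le hs).ne')).const_mul (c j)
    obtain ⟨y, hy, hy0, hF'y⟩ := exists_strictMono_deriv_eq_zero hx hF' hF
    have hc' := ih (μ := fun j => μ j.succ - μ 0 - 1) (c := fun j => c j.succ * (μ j.succ - μ 0))
      (fun i j hij => Fin.succ_injective _ (hμ (by simpa using hij))) hy
      (fun i => (hx0 0).trans (hy0 i)) fun i => by
        simpa [F', Fin.sum_univ_succ, mul_assoc] using hF'y i
    have hsucc (j : Fin r) : c j.succ = 0 := by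
      simpa [sub_eq_zero, hμ.ne (Fin.succ_ne_zero j)] using congrFun hc' j
    have h0 : c 0 = 0 := by
      simpa [Fin.sum_univ_succ, hsucc, (Real.rpow_pos_of_pos (hx0 0) (μ 0)).ne'] using h 0
    funext j
    exact Fin.cases h0 hsucc j

theorem det_genVandermonde_ne_zero {r : ℕ} {w μ : Fin r → ℝ} (hw : Injective w)
    (hw0 : ∀ i, 0 < w i) (hμ : Injective μ) : (genVandermonde w μ).det ≠ 0 := by
  set σ := Tuple.sort w
  have hσ : StrictMono (w ∘ σ) :=
    (Tuple.monotone_sort w).strictMono_of_injective (hw.comp σ.injective)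
  suffices (genVandermonde (w ∘ σ) μ).det ≠ 0 by
    rw [det_genVandermonde_comp_perm] at this
    exact right_ne_zero_of_mul this
  intro hdet
  obtain ⟨c, hc, hMc⟩ := exists_mulVec_eq_zero_iff.2 hdet
  refine hc (eq_zero_of_sum_mul_rpow_eq_zero hμ hσ (fun i => hw0 _) fun i => ?_)
  simpa [mulVec, dotProduct, genVandermonde, mul_comm] using congrFun hMc i

theorem mul_pos_of_continuousOn_of_ne_zero {f : ℝ → ℝ} {a b : ℝ} (hab : a ≤ b)
    (hf : ContinuousOn f (Set.Icc a b)) (hf0 : ∀ s ∈ Set.Icc a b, f s ≠ 0) : 0 < f a * f b := by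
  by_contra! hneg
  have hzero : (0 : ℝ) ∈ Set.uIcc (f a) (f b) := by
    rcases mul_nonpos_iff.1 hneg with h | h
    · exact Set.mem_uIcc.2 (Or.inr h.symm)
    · exact Set.mem_uIcc.2 (Or.inl h)
  obtain ⟨s, hs, hfs⟩ := intermediate_value_uIcc (by rwa [Set.uIcc_of_le hab]) hzero
  exact hf0 s (by rwa [Set.uIcc_of_le hab] at hs) hfs

theorem det_genVandermonde_mul_det_vandermonde_pos {r : ℕ} {w μ : Fin r → ℝ} (hw : Injective w)
    (hw0 : ∀ i, 0 < w i) (hμ : StrictMono μ) :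
    0 < (genVandermonde w μ).det * (vandermonde w).det := by
  -- Deform the exponents linearly to `0, 1, …, r - 1`; the determinant never vanishes on the way.
  set φ : ℝ → ℝ := fun s => (genVandermonde w fun j => (1 - s) * μ j + s * j).det
  have hφ0 : φ 0 = (genVandermonde w μ).det := by simp [φ]
  have hφ1 : φ 1 = (vandermonde w).det := by
    simp only [φ]
    congr 1
    ext i j
    simp [genVandermonde, Real.rpow_natCast]
  have hφ : Continuous φ :=
    Continuous.matrix_det <| continuous_matrix fun i j =>
      Real.continuous_const_rpow (hw0 i).ne' |>.comp (by fun_prop)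
  rw [← hφ0, ← hφ1]
  refine mul_pos_of_continuousOn_of_ne_zero zero_le_one hφ.continuousOn fun s ⟨hs0, hs1⟩ => ?_
  refine det_genVandermonde_ne_zero hw hw0 (StrictMono.injective fun i j hij => ?_)
  have hμij := sub_pos.2 (hμ hij)
  have hij' : (i : ℝ) < j := by exact_mod_cast hij
  nlinarith [mul_pos hμij (sub_pos.2 hij'), mul_nonneg (sub_nonneg.2 hs1) (sq_nonneg (μ j - μ i)),
    mul_nonneg hs0 (sq_nonneg ((j : ℝ) - i))]

theorem det_vandermonde_cons {r : ℕ} (a : ℝ) (w : Fin r → ℝ) :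
    (vandermonde (Fin.cons a w : Fin (r + 1) → ℝ)).det =
      (∏ j, (w j - a)) * (vandermonde w).det := by
  rw [det_vandermonde, det_vandermonde, Fin.prod_univ_succ]
  simp [Fin.Ioi_zero_eq_map, Fin.prod_Ioi_succ]

noncomputable def genVandermondeCofactor {r : ℕ} (w : Fin r → ℝ) (μ : Fin (r + 1) → ℝ)
    (j : Fin (r + 1)) : ℝ :=
  (-1) ^ (j : ℕ) * (genVandermonde w (μ ∘ j.succAbove)).det

theorem det_genVandermonde_cons {r : ℕ} (s : ℝ) (w : Fin r → ℝ) (μ : Fin (r + 1) → ℝ) :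
    (genVandermonde (Fin.cons s w) μ).det = genVandermondeCofactor w μ ⬝ᵥ fun j => s ^ μ j := by
  rw [det_succ_row_zero]
  refine Finset.sum_congr rfl fun j _ => ?_
  simp only [genVandermondeCofactor, genVandermonde, of_apply, Fin.cons_zero]
  rw [mul_right_comm]
  rfl

theorem det_genVandermonde_cons_self {r : ℕ} (w : Fin r → ℝ) (i : Fin r) (μ : Fin (r + 1) → ℝ) :
    (genVandermonde (Fin.cons (w i) w) μ).det = 0 :=
  det_zero_of_row_eq (Fin.succ_ne_zero i).symm rfl

theorem insertNth_succ_comp_succAbove_castSucc {r : ℕ} (m : Fin (r + 1) → ℝ) (p : Fin (r + 1))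
    (b : ℝ) :
    (Fin.insertNth p.succ b m : Fin (r + 2) → ℝ) ∘ p.castSucc.succAbove = update m p b := by
  funext j
  rcases lt_trichotomy j p with h | rfl | h
  · rw [Function.comp_apply, Fin.succAbove_castSucc_of_lt _ _ h,
      ← Fin.succAbove_of_castSucc_lt p.succ j (Fin.castSucc_lt_succ_iff.2 h.le),
      Fin.insertNth_apply_succAbove, update_of_ne h.ne]
  · rw [Function.comp_apply, Fin.succAbove_castSucc_self, Fin.insertNth_apply_same, update_self]
  · rw [Function.comp_apply, Fin.succAbove_castSucc_of_le _ _ h.le,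
      ← Fin.succAbove_of_le_castSucc p.succ j (Fin.succ_le_castSucc_iff.2 h),
      Fin.insertNth_apply_succAbove, update_of_ne h.ne']

theorem det_genVandermonde_cons_eq_insertNth {r : ℕ} {E : Fin (r + 2) → ℝ} {i : Fin (r + 2)}
    {μ : Fin (r + 1) → ℝ} (h : E ∘ i.succAbove = μ) (s : ℝ) (w : Fin r → ℝ) :
    (genVandermonde (Fin.cons s w) μ).det =
      (Fin.insertNth i 0 (genVandermondeCofactor w μ) : Fin (r + 2) → ℝ) ⬝ᵥ fun q => s ^ E q := by
  rw [det_genVandermonde_cons, dotProduct, dotProduct, Fin.sum_univ_succAbove _ i,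
    Fin.insertNth_apply_same, zero_mul, zero_add, ← h]
  simp only [Fin.insertNth_apply_succAbove, Function.comp_apply]

-- With `E = insertNth p.succ b m`, all four terms expand along the first row into the powers
-- `s ^ E q`, and the two coefficients of `s ^ b` cancel.
theorem exists_det_genVandermonde_combination_eq_dotProduct {r : ℕ} (w : Fin r → ℝ) (a b : ℝ)
    (m : Fin (r + 1) → ℝ) (p : Fin (r + 1)) :
    ∃ c : Fin (r + 1) → ℝ, ∀ s : ℝ,
      (genVandermonde (Fin.cons s w) (update m p b)).det * (genVandermonde (Fin.cons a w) m).det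
        - (genVandermonde (Fin.cons a w) (update m p b)).det
          * (genVandermonde (Fin.cons s w) m).det
        + (genVandermonde w (m ∘ p.succAbove)).det
          * (genVandermonde (Fin.cons s (Fin.cons a w)) (Fin.insertNth p.succ b m)).det
      = c ⬝ᵥ fun j => s ^ m j := by
  set E : Fin (r + 2) → ℝ := Fin.insertNth p.succ b m
  have hEm : E ∘ p.succ.succAbove = m := funext (Fin.insertNth_apply_succAbove _ _ _)
  set Aa := (genVandermonde (Fin.cons a w) m).det
  set Ba := (genVandermonde (Fin.cons a w) (update m p b)).det
  set X := (genVandermonde w (m ∘ p.succAbove)).det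
  set c : Fin (r + 2) → ℝ :=
    Aa • Fin.insertNth p.castSucc 0 (genVandermondeCofactor w (update m p b))
      - Ba • Fin.insertNth p.succ 0 (genVandermondeCofactor w m)
      + X • genVandermondeCofactor (Fin.cons a w) E
  have hcp : c p.succ = 0 := by
    have hX : update m p b ∘ p.succAbove = m ∘ p.succAbove :=
      update_comp_eq_of_notMem_range _ _ (by simp)
    have hB : (Fin.insertNth p.castSucc 0 (genVandermondeCofactor w (update m p b)) :
        Fin (r + 2) → ℝ) p.succ = (-1) ^ (p : ℕ) * X := by
      rw [← Fin.succAbove_castSucc_self, Fin.insertNth_apply_succAbove, genVandermondeCofactor, hX]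
    simp only [c, Pi.add_apply, Pi.sub_apply, Pi.smul_apply, smul_eq_mul, hB,
      Fin.insertNth_apply_same, genVandermondeCofactor, hEm, Fin.val_succ, pow_succ]
    ring
  refine ⟨c ∘ p.succ.succAbove, fun s => ?_⟩
  have hc : (c ⬝ᵥ fun q => s ^ E q) = (c ∘ p.succ.succAbove) ⬝ᵥ fun j => s ^ m j := by
    rw [dotProduct, dotProduct, Fin.sum_univ_succAbove _ p.succ, hcp, zero_mul, zero_add]
    simp only [Function.comp_apply, ← hEm]
  rw [← hc]
  simp only [c, det_genVandermonde_cons_eq_insertNth (insertNth_succ_comp_succAbove_castSucc m p b),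
    det_genVandermonde_cons_eq_insertNth hEm, det_genVandermonde_cons, add_dotProduct,
    sub_dotProduct, smul_dotProduct, smul_eq_mul]
  ring

-- The Desnanot–Jacobi identity for rows `0, 1` and columns `p, p + 1` of the generalised
-- Vandermonde matrix with nodes `t, a, w` and exponents `insertNth p.succ b m`.
theorem det_genVandermonde_condensation {r : ℕ} (w : Fin r → ℝ) (a t b : ℝ)
    (m : Fin (r + 1) → ℝ) (p : Fin (r + 1)) (hA : (genVandermonde (Fin.cons a w) m).det ≠ 0) :
    (genVandermonde (Fin.cons t w) (update m p b)).det * (genVandermonde (Fin.cons a w) m).det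
      - (genVandermonde (Fin.cons a w) (update m p b)).det * (genVandermonde (Fin.cons t w) m).det
      = -(genVandermonde w (m ∘ p.succAbove)).det
          * (genVandermonde (Fin.cons t (Fin.cons a w)) (Fin.insertNth p.succ b m)).det := by
  obtain ⟨c, hc⟩ := exists_det_genVandermonde_combination_eq_dotProduct w a b m p
  -- The combination vanishes at every node, since each term then has two equal rows.
  have hnodes (i : Fin (r + 1)) :
      (fun j => (Fin.cons a w : Fin (r + 1) → ℝ) i ^ m j) ⬝ᵥ c = 0 := by
    rw [dotProduct_comm, ← hc]
    refine Fin.cases ?_ (fun i => ?_) i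
    · have h := det_genVandermonde_cons_self (Fin.cons a w : Fin (r + 1) → ℝ) 0
        (Fin.insertNth p.succ b m)
      rw [Fin.cons_zero] at h ⊢
      rw [h]
      ring
    · have h := det_genVandermonde_cons_self (Fin.cons a w : Fin (r + 1) → ℝ) i.succ
        (Fin.insertNth p.succ b m)
      rw [Fin.cons_succ] at h ⊢
      rw [h, det_genVandermonde_cons_self, det_genVandermonde_cons_self]
      ring
  have ht := hc t
  rw [eq_zero_of_mulVec_eq_zero hA (funext hnodes), zero_dotProduct] at ht
  linear_combination ht

noncomputable def genVandermondeRatio {r : ℕ} (w n m : Fin r → ℝ) : ℝ :=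
  (genVandermonde w n).det / (genVandermonde w m).det

theorem genVandermondeRatio_comp_perm {r : ℕ} (w n m : Fin r → ℝ) (σ : Equiv.Perm (Fin r)) :
    genVandermondeRatio (w ∘ σ) n m = genVandermondeRatio w n m := by
  simp only [genVandermondeRatio, det_genVandermonde_comp_perm]
  exact mul_div_mul_left _ _ (by simp)

theorem genVandermondeRatio_pos {r : ℕ} {w n m : Fin r → ℝ} (hw : Injective w) (hw0 : ∀ i, 0 < w i)
    (hn : StrictMono n) (hm : StrictMono m) : 0 < genVandermondeRatio w n m := by
  have hn' := det_genVandermonde_mul_det_vandermonde_pos hw hw0 hn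
  have hm' := det_genVandermonde_mul_det_vandermonde_pos hw hw0 hm
  refine div_pos_iff.2 (pos_and_pos_or_neg_and_neg_of_mul_pos ?_)
  nlinarith [mul_pos hn' hm', sq_nonneg (vandermonde w).det]

theorem genVandermondeRatio_mul {r : ℕ} {w : Fin r → ℝ} (n μ m : Fin r → ℝ)
    (hμ : (genVandermonde w μ).det ≠ 0) :
    genVandermondeRatio w n μ * genVandermondeRatio w μ m = genVandermondeRatio w n m :=
  div_mul_div_cancel₀ hμ

theorem strictMono_insertNth_succ {α : Type*} [Preorder α] {r : ℕ} {m : Fin (r + 1) → α}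
    {p : Fin (r + 1)} {b : α} (hm : StrictMono m) (hmb : StrictMono (update m p b))
    (hb : m p < b) : StrictMono (Fin.insertNth p.succ b m : Fin (r + 2) → α) := by
  refine (Fin.strictMono_insertNth_iff _ _ _).2 ⟨hm, fun i hi => ?_, fun i hi => ?_⟩
  · exact (hm.monotone (Fin.castSucc_lt_succ_iff.1 hi)).trans_lt hb
  · have hpi : p < i := Fin.succ_le_castSucc_iff.1 hi
    simpa [update_of_ne hpi.ne'] using hmb hpi

theorem genVandermondeRatio_cons_lt_of_update {r : ℕ} {w : Fin r → ℝ} {a t b : ℝ}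
    {m : Fin (r + 1) → ℝ} {p : Fin (r + 1)} (hw : ∀ i, 0 < w i) (ha : 0 < a) (hat : a < t)
    (hwa : Injective (Fin.cons a w : Fin (r + 1) → ℝ))
    (hwt : Injective (Fin.cons t w : Fin (r + 1) → ℝ))
    (hm : StrictMono m) (hmb : StrictMono (update m p b)) (hb : m p < b) :
    genVandermondeRatio (Fin.cons a w) (update m p b) m <
      genVandermondeRatio (Fin.cons t w) (update m p b) m := by
  have hpos {s : ℝ} (hs : 0 < s) : ∀ i, 0 < (Fin.cons s w : Fin (r + 1) → ℝ) i := Fin.cases hs hw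
  have hwinj : Injective w := (Fin.cons_injective_iff.1 hwa).2
  have hwta : Injective (Fin.cons t (Fin.cons a w : Fin (r + 1) → ℝ) : Fin (r + 2) → ℝ) := by
    refine Fin.cons_injective_iff.2 ⟨?_, hwa⟩
    rintro ⟨i, hi⟩
    exact Fin.cases (fun h => hat.ne h) (fun i h => (Fin.cons_injective_iff.1 hwt).1 ⟨i, h⟩) i hi
  have hX := det_genVandermonde_mul_det_vandermonde_pos hwinj hw
    (hm.comp (Fin.strictMono_succAbove p))
  have hD := det_genVandermonde_mul_det_vandermonde_pos hwta
    (Fin.cases (hat.trans' ha) (hpos ha)) (strictMono_insertNth_succ hm hmb hb)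
  have hAa := det_genVandermonde_mul_det_vandermonde_pos hwa (hpos ha) hm
  have hAt := det_genVandermonde_mul_det_vandermonde_pos hwt (hpos (hat.trans' ha)) hm
  have hAa0 := left_ne_zero_of_mul hAa.ne'
  have hAt0 := left_ne_zero_of_mul hAt.ne'
  have hcond := det_genVandermonde_condensation w a t b m p hAa0
  set X := (genVandermonde w (m ∘ p.succAbove)).det
  set D := (genVandermonde (Fin.cons t (Fin.cons a w)) (Fin.insertNth p.succ b m)).det
  set Aa := (genVandermonde (Fin.cons a w) m).det
  set At := (genVandermonde (Fin.cons t w) m).det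
  set Va := (vandermonde (Fin.cons a w : Fin (r + 1) → ℝ)).det
  set Vt := (vandermonde (Fin.cons t w : Fin (r + 1) → ℝ)).det
  have hV : (vandermonde w).det * (vandermonde (Fin.cons t (Fin.cons a w) : Fin (r + 2) → ℝ)).det
      * Va * Vt = (a - t) * (Va * Vt) ^ 2 := by
    simp only [Va, Vt, det_vandermonde_cons, Fin.prod_univ_succ, Fin.cons_zero, Fin.cons_succ]
    ring
  -- Each generalised determinant has the sign of the ordinary Vandermonde one (`hX`, …, `hAt`).
  have hsign : X * D * Aa * At < 0 := by
    have hVaVt : 0 < (Va * Vt) ^ 2 :=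
      sq_pos_of_ne_zero (mul_ne_zero (right_ne_zero_of_mul hAa.ne') (right_ne_zero_of_mul hAt.ne'))
    nlinarith [mul_pos (mul_pos hX hD) (mul_pos hAa hAt), mul_pos (sub_pos.2 hat) hVaVt]
  rw [genVandermondeRatio, genVandermondeRatio, ← sub_pos, div_sub_div _ _ hAt0 hAa0]
  rw [mul_comm At, hcond]
  refine div_pos_iff.2 (pos_and_pos_or_neg_and_neg_of_mul_pos ?_)
  linarith

theorem strictMono_update_of_max {α : Type*} [Preorder α] {r : ℕ} {m n : Fin r → α}
    (hm : StrictMono m) (hn : StrictMono n) {p : Fin r} (hp : m p ≤ n p) (hgt : ∀ j, p < j → m j = n j) :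
    StrictMono (update m p (n p)) := by
  intro i j hij
  rcases eq_or_ne i p with rfl | hi
  · simpa [hij.ne', hgt j hij] using hn hij
  rcases eq_or_ne j p with rfl | hj
  · simpa [hi] using (hm hij).trans_le hp
  simpa [hi, hj] using hm hij

theorem genVandermondeRatio_cons_lt {r : ℕ} {w : Fin r → ℝ} {a t : ℝ} (hw : ∀ i, 0 < w i)
    (ha : 0 < a) (hat : a < t) (hwa : Injective (Fin.cons a w : Fin (r + 1) → ℝ))
    (hwt : Injective (Fin.cons t w : Fin (r + 1) → ℝ)) {m n : Fin (r + 1) → ℝ}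
    (hm : StrictMono m) (hn : StrictMono n) (hle : ∀ j, m j ≤ n j) (hmn : m ≠ n) :
    genVandermondeRatio (Fin.cons a w) n m < genVandermondeRatio (Fin.cons t w) n m := by
  obtain ⟨d, hd⟩ : ∃ d, #{j | m j ≠ n j} = d := ⟨_, rfl⟩
  induction d generalizing m with
  | zero =>
    refine absurd (funext ?_) hmn
    simpa using Finset.card_eq_zero.1 hd
  | succ d ih =>
    -- Raise `m` to `n` at the largest index where they differ; this keeps `m` increasing.
    set S : Finset (Fin (r + 1)) := {j | m j ≠ n j}
    have hS : S.Nonempty := Finset.card_pos.1 (by omega)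
    set p := S.max' hS
    have hp : m p ≠ n p := (Finset.mem_filter.1 (S.max'_mem hS)).2
    have hgt (j : Fin (r + 1)) (hj : p < j) : m j = n j := by
      by_contra h
      exact (S.le_max' j (by simp [S, h])).not_gt hj
    set μ := update m p (n p)
    have hμ : StrictMono μ := strictMono_update_of_max hm hn (hle p) hgt
    have hstep :=
      genVandermondeRatio_cons_lt_of_update hw ha hat hwa hwt hm hμ ((hle p).lt_of_ne hp)
    rcases eq_or_ne μ n with hμn | hμn
    · rwa [← hμn]
    have hcard : #{j | μ j ≠ n j} = d := by
      have : ({j | μ j ≠ n j} : Finset (Fin (r + 1))) = S.erase p := by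
        ext j
        rcases eq_or_ne j p with rfl | hj <;> simp [μ, S, *]
      rw [this, Finset.card_erase_of_mem (S.max'_mem hS), hd, Nat.add_sub_cancel]
    have hμle (j : Fin (r + 1)) : μ j ≤ n j := by
      rcases eq_or_ne j p with rfl | hj <;> simp [μ, *]
    rw [← genVandermondeRatio_mul n μ m
        (det_genVandermonde_ne_zero hwa (Fin.cases ha hw) hμ.injective),
      ← genVandermondeRatio_mul n μ m
        (det_genVandermonde_ne_zero hwt (Fin.cases (ha.trans hat) hw) hμ.injective)]
    exact mul_lt_mul'' (ih hμ hμle hμn hcard) hstep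
      (genVandermondeRatio_pos hwa (Fin.cases ha hw) hn hμ).le
      (genVandermondeRatio_pos hwa (Fin.cases ha hw) hμ hm).le

theorem stmt10_general (N : ℕ) (m n : Fin N → ℝ)
    (hm : StrictMono m) (hn : StrictMono n) (hmn : m ≠ n) (hle : ∀ j, m j ≤ n j)
    (u : Fin N → ℝ) (hu : ∀ i, 0 < u i) (huinj : Function.Injective u)
    (k : Fin N) (t : ℝ) (ht : u k < t)
    (hvinj : Function.Injective (Function.update u k t)) :
    Matrix.det (Matrix.of fun i j => u i ^ m j) ≠ 0 ∧
    Matrix.det (Matrix.of fun i j => Function.update u k t i ^ m j) ≠ 0 ∧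
    Matrix.det (Matrix.of fun i j => u i ^ n j) /
        Matrix.det (Matrix.of fun i j => u i ^ m j) <
      Matrix.det (Matrix.of fun i j => Function.update u k t i ^ n j) /
        Matrix.det (Matrix.of fun i j => Function.update u k t i ^ m j) := by
  have hvpos (i : Fin N) : 0 < update u k t i := by
    rcases eq_or_ne i k with rfl | h
    · simpa using (hu i).trans ht
    · simpa [h] using hu i
  refine ⟨det_genVandermonde_ne_zero huinj hu hm.injective,
    det_genVandermonde_ne_zero hvinj hvpos hm.injective, ?_⟩
  obtain ⟨r, rfl⟩ := Nat.exists_eq_add_one_of_ne_zero k.pos.ne'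
  -- Move row `k` to the top; this does not change the ratio.
  set σ := Equiv.swap 0 k
  set w := Fin.tail (u ∘ σ)
  have hu' : u ∘ σ = Fin.cons (u k) w := by
    rw [← Fin.cons_self_tail (u ∘ σ)]
    simp [σ, w]
  have hv' : update u k t ∘ σ = Fin.cons t w := by
    rw [update_comp_equiv, Equiv.symm_swap, Equiv.swap_apply_right, hu', Fin.update_cons_zero]
  have key := genVandermondeRatio_cons_lt (w := w) (fun i => hu _) (hu k) ht
    (hu' ▸ huinj.comp σ.injective) (hv' ▸ hvinj.comp σ.injective) hm hn hle hmn
  rwa [← hu', ← hv', genVandermondeRatio_comp_perm, genVandermondeRatio_comp_perm] at key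

theorem stmt10 (N : ℕ) (hN : 1 ≤ N) (m n : Fin N → ℝ)
    (hm : StrictMono m) (hn : StrictMono n) (hmn : m ≠ n) (hle : ∀ j, m j ≤ n j)
    (u : Fin N → ℝ) (hu : ∀ i, 0 < u i) (huinj : Function.Injective u)
    (k : Fin N) (t : ℝ) (ht : u k < t)
    (hvinj : Function.Injective (Function.update u k t)) :
    Matrix.det (Matrix.of fun i j => u i ^ m j) ≠ 0 ∧
    Matrix.det (Matrix.of fun i j => Function.update u k t i ^ m j) ≠ 0 ∧
    Matrix.det (Matrix.of fun i j => u i ^ n j) /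
        Matrix.det (Matrix.of fun i j => u i ^ m j) <
      Matrix.det (Matrix.of fun i j => Function.update u k t i ^ n j) /
        Matrix.det (Matrix.of fun i j => Function.update u k t i ^ m j) :=
  stmt10_general N m n hm hn hmn hle u hu huinj k t ht hvinj
end

section
/- Let N ≥ 1 be an integer, let S be a finite set of real numbers, let c : S → ℝ, and let u ∈ (0, ∞)^N. Define the N×N matrix F[u uᵀ] with (i, j) entry Σ_{s ∈ S} c(s)·(u_i u_j)^s (real powers of positive reals). Then det F[u uᵀ] = Σ_{𝐧} (det(u^{∘𝐧}))² · ∏_{j=1}^N c(n_j), where the sum runs over all strictly increasing N-tuples 𝐧 = (n₁ < n₂ < ⋯ < n_N) with entries in S. -/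
/-!
The matrix `F[u uᵀ]` factors as `A * B` with `A i s = u i ^ s` and `B s j = c s * u j ^ s`, i.e.
`B = diag(c) * Aᵀ`. The Cauchy–Binet formula expands `det (A * B)` over the strictly increasing
tuples `n` of exponents in `S`, and the `n`-th minor of `B` is `(∏ j, c (n j))` times the `n`-th
minor of `A`, which is the generalized Vandermonde determinant `det (u^{∘n})`.
-/

open Matrix Equiv Finset

theorem Matrix.det_mul_eq_sum_det_submatrix_mul_prod {R m ι : Type*} [CommRing R]
    [Fintype m] [DecidableEq m] [Fintype ι] [DecidableEq ι]
    (A : Matrix m ι R) (B : Matrix ι m R) :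
    (A * B).det = ∑ p : m → ι, (A.submatrix id p).det * ∏ i, B (p i) i := by
  simp only [det_apply', mul_apply, prod_univ_sum, Fintype.piFinset_univ, mul_sum, sum_mul,
    prod_mul_distrib, submatrix_apply, id]
  rw [sum_comm]
  exact sum_congr rfl fun p _ => sum_congr rfl fun σ _ => by ring

section SortedTuples

variable {ι : Type*} [LinearOrder ι] {N : ℕ}

theorem StrictMono.eq_and_eq_of_comp_perm_eq {n n' : Fin N → ι} (hn : StrictMono n)
    (hn' : StrictMono n') {σ σ' : Perm (Fin N)} (h : n ∘ σ = n' ∘ σ') :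
    n = n' ∧ σ = σ' := by
  have hτ : n = n' ∘ (σ' * σ⁻¹) := by
    ext i; simpa using congrFun h (σ⁻¹ i)
  have hn_eq : n = n' :=
    calc n = n' ∘ (σ' * σ⁻¹) := hτ
      _ = n' ∘ (1 : Perm (Fin N)) :=
        Tuple.unique_monotone (hτ ▸ hn.monotone) hn'.monotone
      _ = n' := rfl
  subst hn_eq
  exact ⟨rfl, Equiv.ext fun i => hn.injective (congrFun h i)⟩

theorem Function.Injective.strictMono_comp_sort {p : Fin N → ι} (hp : Function.Injective p) :
    StrictMono (p ∘ Tuple.sort p) :=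
  (Tuple.monotone_sort p).strictMono_of_injective (hp.comp (Tuple.sort p).injective)

theorem Finset.sum_filter_injective_eq_sum_strictMono_sum_perm [Fintype ι] {M : Type*}
    [AddCommMonoid M] [DecidablePred (Function.Injective : (Fin N → ι) → Prop)]
    [DecidablePred (StrictMono : (Fin N → ι) → Prop)] (f : (Fin N → ι) → M) :
    ∑ p with Function.Injective p, f p =
      ∑ n with StrictMono n, ∑ σ : Perm (Fin N), f (n ∘ σ) := by
  rw [← sum_product']
  symm
  refine sum_bij (fun q _ => q.1 ∘ q.2) ?_ ?_ ?_ fun _ _ => rfl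
  · intro q hq
    simp only [mem_filter, mem_product, mem_univ, true_and, and_true] at hq ⊢
    exact hq.injective.comp q.2.injective
  · intro q hq q' hq' h
    simp only [mem_filter, mem_product, mem_univ, true_and, and_true] at hq hq'
    obtain ⟨h1, h2⟩ := hq.eq_and_eq_of_comp_perm_eq hq' h
    exact Prod.ext h1 h2
  · intro p hp
    simp only [mem_filter, mem_univ, true_and] at hp
    refine ⟨(p ∘ Tuple.sort p, (Tuple.sort p)⁻¹), ?_, ?_⟩
    · simpa using hp.strictMono_comp_sort
    · ext i; simp

end SortedTuples

open scoped Classical in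
theorem Matrix.det_mul_eq_sum_strictMono {R ι : Type*} [CommRing R] [LinearOrder ι] [Fintype ι]
    {N : ℕ} (A : Matrix (Fin N) ι R) (B : Matrix ι (Fin N) R) :
    (A * B).det = ∑ n with StrictMono n, (A.submatrix id n).det * (B.submatrix n id).det := by
  have h_noninj : ∀ p : Fin N → ι, ¬ Function.Injective p → (A.submatrix id p).det = 0 := by
    intro p hp
    obtain ⟨i, j, hij, hne⟩ := Function.not_injective_iff.mp hp
    exact det_zero_of_column_eq hne fun k => by simp [hij]
  rw [det_mul_eq_sum_det_submatrix_mul_prod,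
    ← sum_filter_of_ne (p := Function.Injective) fun p _ h => ?_,
    sum_filter_injective_eq_sum_strictMono_sum_perm]
  · refine sum_congr rfl fun n _ => ?_
    simp only [det_apply' (B.submatrix n id), mul_sum, submatrix_apply, id, Function.comp_apply]
    refine sum_congr rfl fun σ _ => ?_
    rw [show A.submatrix id (n ∘ σ) = (A.submatrix id n).submatrix id σ from rfl, det_permute']
    ring
  · contrapose! h
    rw [h_noninj p h, zero_mul]

theorem stmt19_general (N : ℕ) (S : Finset ℝ) (c : ℝ → ℝ)
    (u : Fin N → ℝ) (hu : ∀ i, 0 < u i) :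
    Matrix.det (Matrix.of fun i j : Fin N => ∑ s ∈ S, c s * (u i * u j) ^ s) =
      ∑ n ∈ Finset.univ.filter
          (fun n : Fin N → {x : ℝ // x ∈ S} =>
            ∀ a b : Fin N, a < b → (n a : ℝ) < (n b : ℝ)),
        (Matrix.det (Matrix.of fun i j : Fin N => u i ^ (n j : ℝ))) ^ 2 *
          ∏ j, c (n j : ℝ) := by
  let A : Matrix (Fin N) S ℝ := of fun i s => u i ^ (s : ℝ)
  let B : Matrix S (Fin N) ℝ := of fun s j => c s * u j ^ (s : ℝ)
  have hAB : of (fun i j : Fin N => ∑ s ∈ S, c s * (u i * u j) ^ s) = A * B := by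
    ext i j
    rw [mul_apply, of_apply, ← sum_coe_sort S]
    refine sum_congr rfl fun s _ => ?_
    simp only [A, B, of_apply, Real.mul_rpow (hu i).le (hu j).le]
    ring
  have hB : ∀ n : Fin N → S,
      (B.submatrix n id).det = (∏ j, c (n j)) * (A.submatrix id n).det := fun n => by
    rw [← det_transpose (A.submatrix id n), ← det_mul_column]; rfl
  rw [hAB, det_mul_eq_sum_strictMono]
  refine sum_congr (filter_congr fun n _ => Iff.rfl) fun n _ => ?_
  rw [hB]
  simp only [A, submatrix, of_apply, id]
  ring

theorem stmt19 (N : ℕ) (hN : 1 ≤ N) (S : Finset ℝ) (c : ℝ → ℝ)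
    (u : Fin N → ℝ) (hu : ∀ i, 0 < u i) :
    Matrix.det (Matrix.of fun i j : Fin N => ∑ s ∈ S, c s * (u i * u j) ^ s) =
      ∑ n ∈ Finset.univ.filter
          (fun n : Fin N → {x : ℝ // x ∈ S} =>
            ∀ a b : Fin N, a < b → (n a : ℝ) < (n b : ℝ)),
        (Matrix.det (Matrix.of fun i j : Fin N => u i ^ (n j : ℝ))) ^ 2 *
          ∏ j, c (n j : ℝ) :=
  stmt19_general N S c u hu
end
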